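/- For L ∈ {FS, MIPC}: if F → φ^f ∈ L, where f is a variable not in var φ, φ^f = [f/⊥]φ, and F = (◇^{≤ md φ} f → f) ∧ (f → □^{≤ md φ} f) ∧ ⋀_{p ∈ var φ} □^{≤ md φ}(f → p), then φ ∈ L. -/

import Mathlib

/-- Intuitionistic modal formulas: variables indexed by ℕ, ⊥, ∧, ∨, →, ◇, □. -/
inductive IMF : Type
  | var : ℕ → IMF
  | bot : IMF
  | and : IMF → IMF → IMF
  | or  : IMF → IMF → IMF
  | imp : IMF → IMF → IMF
  | dia : IMF → IMF
  | box : IMF → IMF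
  deriving DecidableEq

namespace IMF

/-- Length of a formula: a variable `pᵢ` contributes `⌈log₂ (i+2)⌉` symbols
(binary encoding of variable indices), every connective and `⊥` contributes `1`. -/
def len : IMF → ℕ
  | var i => Nat.clog 2 (i + 2)
  | bot => 1
  | and φ ψ => len φ + len ψ + 1
  | or φ ψ => len φ + len ψ + 1
  | imp φ ψ => len φ + len ψ + 1
  | dia φ => len φ + 1
  | box φ => len φ + 1

/-- Modal depth. -/
def md : IMF → ℕ
  | var _ => 0
  | bot => 0
  | and φ ψ => max (md φ) (md ψ)
  | or φ ψ => max (md φ) (md ψ)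
  | imp φ ψ => max (md φ) (md ψ)
  | dia φ => md φ + 1
  | box φ => md φ + 1

/-- The set of propositional variables of a formula. -/
def vars : IMF → Finset ℕ
  | var i => {i}
  | bot => ∅
  | and φ ψ => vars φ ∪ vars ψ
  | or φ ψ => vars φ ∪ vars ψ
  | imp φ ψ => vars φ ∪ vars ψ
  | dia φ => vars φ
  | box φ => vars φ

/-- A formula is positive if it contains no occurrence of `⊥`. -/
def Positive : IMF → Prop
  | var _ => True
  | bot => False
  | and φ ψ => Positive φ ∧ Positive ψ
  | or φ ψ => Positive φ ∧ Positive ψ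
  | imp φ ψ => Positive φ ∧ Positive ψ
  | dia φ => Positive φ
  | box φ => Positive φ

/-- A formula in at most one variable, namely `p = var 0`. -/
def OneVar (φ : IMF) : Prop := φ.vars ⊆ {0}

/-- Uniform substitution of formulas for propositional variables. -/
def subst (σ : ℕ → IMF) : IMF → IMF
  | var i => σ i
  | bot => bot
  | and φ ψ => and (subst σ φ) (subst σ ψ)
  | or φ ψ => or (subst σ φ) (subst σ ψ)
  | imp φ ψ => imp (subst σ φ) (subst σ ψ)
  | dia φ => dia (subst σ φ)
  | box φ => box (subst σ φ)

/-- `[f/⊥]φ`: replace every occurrence of `⊥` by the variable `f`. -/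
def botTo (f : ℕ) : IMF → IMF
  | var i => var i
  | bot => var f
  | and φ ψ => and (botTo f φ) (botTo f ψ)
  | or φ ψ => or (botTo f φ) (botTo f ψ)
  | imp φ ψ => imp (botTo f φ) (botTo f ψ)
  | dia φ => dia (botTo f φ)
  | box φ => box (botTo f φ)

theorem len_pos : ∀ φ : IMF, 0 < φ.len
  | var i => Nat.clog_pos (by norm_num) (by omega)
  | bot => Nat.one_pos
  | and _ _ => Nat.succ_pos _
  | or _ _ => Nat.succ_pos _
  | imp _ _ => Nat.succ_pos _
  | dia _ => Nat.succ_pos _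
  | box _ => Nat.succ_pos _

end IMF

/-- An FS-frame: a partial order `R` on worlds `W`, and for each world a domain
`Δ w ⊆ D` of points with a binary relation `S w` on `Δ w`, monotone along `R`. -/
structure FSFrame where
  W : Type
  D : Type
  R : W → W → Prop
  refl : ∀ w, R w w
  antisymm : ∀ w v, R w v → R v w → w = v
  trans : ∀ w v u, R w v → R v u → R w u
  Δ : W → Set D
  S : W → D → D → Prop
  Δ_ne : ∀ w, (Δ w).Nonempty
  S_dom : ∀ w x y, S w x y → x ∈ Δ w ∧ y ∈ Δ w
  Δ_mono : ∀ w v, R w v → Δ w ⊆ Δ v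
  S_mono : ∀ w v, R w v → ∀ x y, S w x y → S v x y

/-- An FS-model: an FS-frame together with a monotone valuation. -/
structure FSModel extends FSFrame where
  V : W → ℕ → Set D
  V_sub : ∀ w p, V w p ⊆ Δ w
  V_mono : ∀ w v, R w v → ∀ p, V w p ⊆ V v p

/-- The truth relation `M, w, x ⊨ φ`. -/
def FSModel.truth (M : FSModel) : IMF → M.W → M.D → Prop
  | .var p, w, x => x ∈ M.V w p
  | .bot, _, _ => False
  | .and φ ψ, w, x => M.truth φ w x ∧ M.truth ψ w x
  | .or φ ψ, w, x => M.truth φ w x ∨ M.truth ψ w x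
  | .imp φ ψ, w, x => ∀ v, M.R w v → M.truth φ v x → M.truth ψ v x
  | .dia φ, w, x => ∃ y, M.S w x y ∧ M.truth φ w y
  | .box φ, w, x => ∀ v, M.R w v → ∀ y, M.S v x y → M.truth φ v y

/-- A formula is true in a model if it is true at every point of every world. -/
def FSModel.trueIn (M : FSModel) (φ : IMF) : Prop :=
  ∀ w, ∀ x ∈ M.Δ w, M.truth φ w x

/-- MIPC-condition: `S w = Δ w × Δ w` for every world `w`. -/
def FSModel.isMIPC (M : FSModel) : Prop :=
  ∀ w, ∀ x ∈ M.Δ w, ∀ y ∈ M.Δ w, M.S w x y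

/-- The logic FS: formulas true in every FS-model (equivalently, valid on every FS-frame). -/
def FSLogic : Set IMF := {φ | ∀ M : FSModel, M.trueIn φ}

/-- The logic MIPC: formulas true in every MIPC-model. -/
def MIPCLogic : Set IMF := {φ | ∀ M : FSModel, M.isMIPC → M.trueIn φ}

namespace IMF

/-- `◇ⁿ φ`. -/
def diaIter : ℕ → IMF → IMF
  | 0, φ => φ
  | n + 1, φ => dia (diaIter n φ)

/-- `□ⁿ φ`. -/
def boxIter : ℕ → IMF → IMF
  | 0, φ => φ
  | n + 1, φ => box (boxIter n φ)

/-- `◇^{≤n} φ = φ ∨ ◇φ ∨ … ∨ ◇ⁿφ`. -/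
def diaLe : ℕ → IMF → IMF
  | 0, φ => φ
  | n + 1, φ => or (diaLe n φ) (diaIter (n + 1) φ)

/-- `□^{≤n} φ = φ ∧ □φ ∧ … ∧ □ⁿφ`. -/
def boxLe : ℕ → IMF → IMF
  | 0, φ => φ
  | n + 1, φ => and (boxLe n φ) (boxIter (n + 1) φ)

/-- Conjunction of a list of formulas (`d` is used for the empty list). -/
def listAnd (d : IMF) : List IMF → IMF
  | [] => d
  | [ψ] => ψ
  | ψ :: l => and ψ (listAnd d l)

/-- The formula `F = F₁ ∧ F₂ ∧ F₃` of Lemma 1, for a formula `φ` and a variable `f`: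
`F₁ = ◇^{≤ md φ} f → f`, `F₂ = f → □^{≤ md φ} f`, `F₃ = ⋀_{p ∈ var φ} □^{≤ md φ}(f → p)`. -/
def FormF (φ : IMF) (f : ℕ) : IMF :=
  and (imp (diaLe φ.md (var f)) (var f))
    (and (imp (var f) (boxLe φ.md (var f)))
      (listAnd (imp (var f) (var f))
        (((vars φ).sort (· ≤ ·)).map fun p => boxLe φ.md (imp (var f) (var p)))))

/-- The embedding `e : φ ↦ (F → φ^f)` into the positive fragment. -/
def eMap (φ : IMF) (f : ℕ) : IMF := imp (FormF φ f) (botTo f φ)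

/-- A variable not occurring in `φ`. -/
def freshVar (φ : IMF) : ℕ := (vars φ).sup id + 1

end IMF

/-- The spiral ("boustrophedon") enumeration `g` of pairs `(i,j)` with `i, j ≥ 2`:
`g(2,2) = 1`, `g(3,2) = 2`, `g(3,3) = 3`, `g(2,3) = 4`, … -/
def gEnum (i j : ℕ) : ℕ :=
  let i' := i - 2
  let j' := j - 2
  let m := max i' j'
  if m % 2 = 0 then
    (if j' = m then m ^ 2 + i' + 1 else (m + 1) ^ 2 - j')
  else
    (if i' = m then m ^ 2 + j' + 1 else (m + 1) ^ 2 - i')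

/-- The inverse of the spiral enumeration: `ginv r` is the pair `(i,j)` (with `i, j ≥ 2`)
such that `gEnum i j = r`, for `r ≥ 1`. -/
def ginv (r : ℕ) : ℕ × ℕ :=
  let m := Nat.sqrt (r - 1)
  let t := r - 1 - m ^ 2
  if m % 2 = 0 then
    (if t ≤ m then (t + 2, m + 2) else (m + 2, (m + 1) ^ 2 - r + 2))
  else
    (if t ≤ m then (m + 2, t + 2) else ((m + 1) ^ 2 - r + 2, m + 2))

/-- `nseq k` is the number of formulas `A^k_i` (equivalently `B^k_i`) at level `k`:
`nseq 0 = 2`, `nseq 1 = 3`, and `nseq (k+1) = (nseq k - 1)²` for `k ≥ 1`. -/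
def nseq : ℕ → ℕ
  | 0 => 2
  | 1 => 3
  | k + 2 => (nseq (k + 1) - 1) ^ 2

namespace IMF

def G1 : IMF := dia (var 0)
def G2 : IMF := imp G1 (var 0)
def G3 : IMF := imp (var 0) (box (var 0))

def A01 : IMF := imp G2 (or G1 G3)
def A02 : IMF := imp G3 (or G1 G2)
def B01 : IMF := imp G1 (or G2 G3)
def B02 : IMF := imp (and A01 (and A02 B01)) (or G1 (or G2 G3))

/-- `l₀ = |A⁰₁| + |B⁰₁| + |A⁰₂| + |B⁰₂|`. -/
def l0 : ℕ := A01.len + B01.len + A02.len + B02.len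

def A11 : IMF := imp (and A01 A02) (or B01 B02)
def A12 : IMF := imp (and A01 B01) (or A02 B02)
def A13 : IMF := imp (and A01 B02) (or A02 B01)
def B11 : IMF := imp (and A02 B01) (or A01 B02)
def B12 : IMF := imp (and A02 B02) (or A01 B01)
def B13 : IMF := imp (and B01 B02) (or A01 A02)

/-- The pair of families `(A^k_·, B^k_·)` of level-`k` formulas:
levels 0 and 1 are as in the paper, and for `k ≥ 1`,
`A^{k+1}_{g(i,j)} = A^k_1 → B^k_1 ∨ A^k_i ∨ B^k_j` and
`B^{k+1}_{g(i,j)} = B^k_1 → A^k_1 ∨ A^k_i ∨ B^k_j`. -/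
def lvl : ℕ → ((ℕ → IMF) × (ℕ → IMF))
  | 0 => (fun i => if i = 2 then A02 else A01, fun i => if i = 2 then B02 else B01)
  | 1 => (fun i => if i = 2 then A12 else if i = 3 then A13 else A11,
          fun i => if i = 2 then B12 else if i = 3 then B13 else B11)
  | k + 2 =>
      let P := lvl (k + 1)
      (fun r => imp (P.1 1) (or (P.2 1) (or (P.1 (ginv r).1) (P.2 (ginv r).2))),
       fun r => imp (P.2 1) (or (P.1 1) (or (P.1 (ginv r).1) (P.2 (ginv r).2))))

/-- `A^k_i`. -/
def Afm (k i : ℕ) : IMF := (lvl k).1 i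

/-- `B^k_i`. -/
def Bfm (k i : ℕ) : IMF := (lvl k).2 i

theorem exists_len_lt_l0_mul_pow (φ : IMF) : ∃ k, φ.len < l0 * 5 ^ k := by
  refine ⟨φ.len, ?_⟩
  have h1 : φ.len < 5 ^ φ.len := Nat.lt_pow_self (by norm_num)
  have hl0 : 0 < l0 := by
    have := IMF.len_pos A01
    unfold l0
    omega
  calc φ.len < 5 ^ φ.len := h1
    _ = 1 * 5 ^ φ.len := (one_mul _).symm
    _ ≤ l0 * 5 ^ φ.len := Nat.mul_le_mul_right _ hl0

/-- `k_φ`: the least `k` with `|φ| < l₀ · 5^k`. -/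
def kphi (φ : IMF) : ℕ := Nat.find (exists_len_lt_l0_mul_pow φ)

/-- The map `φ ↦ φ*`: substitute `A_r^{k_φ+k₀} ∨ B_r^{k_φ+k₀}` for the `r`-th
variable of `φ` (variables ordered increasingly). -/
def starSub (k0 : ℕ) (φ : IMF) : IMF :=
  let K := kphi φ + k0
  let l := (vars φ).sort (· ≤ ·)
  subst (fun p => or (Afm K (l.idxOf p + 1)) (Bfm K (l.idxOf p + 1))) φ

end IMF


/-
From an FS-model (or MIPC-model) `M` refuting `φ` at `(w, x)`, build the model with
the same frame in which the fresh variable `f` is true nowhere. There `f` behaves like `⊥`, so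
`φ^f` is equivalent to `φ`, hence still refuted, and every conjunct of `F` holds vacuously
(the `◇`-part has a false antecedent, the `□`-parts have false or trivially true matrices).
-/

namespace FSModel

open IMF

def clearVar (M : FSModel) (f : ℕ) : FSModel where
  toFSFrame := M.toFSFrame
  V w p := if p = f then ∅ else M.V w p
  V_sub w p := by
    split
    · exact Set.empty_subset _
    · exact M.V_sub w p
  V_mono w v h p := by
    split
    · exact Set.Subset.rfl
    · exact M.V_mono w v h p

theorem isMIPC_clearVar {M : FSModel} (hM : M.isMIPC) (f : ℕ) : (M.clearVar f).isMIPC := hM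

theorem not_truth_clearVar_var (M : FSModel) (f : ℕ) (w : M.W) (x : M.D) :
    ¬ (M.clearVar f).truth (var f) w x := by
  simp only [truth, clearVar, if_pos]
  exact id

theorem truth_clearVar_iff (M : FSModel) {f : ℕ} {ψ : IMF} (hf : f ∉ ψ.vars) (w : M.W)
    (x : M.D) : (M.clearVar f).truth ψ w x ↔ M.truth ψ w x := by
  induction ψ generalizing w x with
  | var i =>
    have hi : i ≠ f := fun h => hf (by simp [vars, h])
    simp only [truth, clearVar, if_neg hi]
    rfl
  | bot => rfl
  | and φ ψ ihφ ihψ =>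
    simp only [vars, Finset.mem_union, not_or] at hf
    exact and_congr (ihφ hf.1 w x) (ihψ hf.2 w x)
  | or φ ψ ihφ ihψ =>
    simp only [vars, Finset.mem_union, not_or] at hf
    exact or_congr (ihφ hf.1 w x) (ihψ hf.2 w x)
  | imp φ ψ ihφ ihψ =>
    simp only [vars, Finset.mem_union, not_or] at hf
    exact forall_congr' fun v => imp_congr_right fun _ => imp_congr (ihφ hf.1 v x) (ihψ hf.2 v x)
  | dia φ ih => exact exists_congr fun y => and_congr_right fun _ => ih hf w y
  | box φ ih =>
    exact forall_congr' fun v => imp_congr_right fun _ =>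
      forall_congr' fun y => imp_congr_right fun _ => ih hf v y

theorem truth_botTo_iff (M : FSModel) {f : ℕ} (hf_false : ∀ w x, ¬ M.truth (var f) w x)
    (ψ : IMF) (w : M.W) (x : M.D) : M.truth (botTo f ψ) w x ↔ M.truth ψ w x := by
  induction ψ generalizing w x with
  | var i => rfl
  | bot => exact iff_false_intro (hf_false w x)
  | and φ ψ ihφ ihψ | or φ ψ ihφ ihψ | imp φ ψ ihφ ihψ =>
    simp only [botTo, truth, ihφ, ihψ]
  | dia φ ih | box φ ih => simp only [botTo, truth, ih]

theorem truth_boxIter (M : FSModel) {ψ : IMF} (h : ∀ w x, M.truth ψ w x) (n : ℕ) (w : M.W)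
    (x : M.D) : M.truth (boxIter n ψ) w x := by
  induction n generalizing w x with
  | zero => exact h w x
  | succ n ih => exact fun v _ y _ => ih v y

theorem truth_boxLe (M : FSModel) {ψ : IMF} (h : ∀ w x, M.truth ψ w x) (n : ℕ) (w : M.W)
    (x : M.D) : M.truth (boxLe n ψ) w x := by
  induction n with
  | zero => exact h w x
  | succ n ih => exact ⟨ih, M.truth_boxIter h (n + 1) w x⟩

theorem not_truth_diaIter (M : FSModel) {ψ : IMF} (h : ∀ w x, ¬ M.truth ψ w x) (n : ℕ)
    (w : M.W) (x : M.D) : ¬ M.truth (diaIter n ψ) w x := by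
  induction n generalizing x with
  | zero => exact h w x
  | succ n ih => exact fun ⟨y, _, hy⟩ => ih y hy

theorem not_truth_diaLe (M : FSModel) {ψ : IMF} (h : ∀ w x, ¬ M.truth ψ w x) (n : ℕ)
    (w : M.W) (x : M.D) : ¬ M.truth (diaLe n ψ) w x := by
  induction n with
  | zero => exact h w x
  | succ n ih => exact fun hn => hn.elim ih (M.not_truth_diaIter h (n + 1) w x)

theorem truth_listAnd (M : FSModel) {d : IMF} (hd : ∀ w x, M.truth d w x) {l : List IMF}
    (hl : ∀ ψ ∈ l, ∀ w x, M.truth ψ w x) (w : M.W) (x : M.D) :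
    M.truth (listAnd d l) w x := by
  induction l with
  | nil => exact hd w x
  | cons ψ l ih =>
    have hψ := hl ψ List.mem_cons_self w x
    have ih := ih fun χ hχ => hl χ (List.mem_cons_of_mem ψ hχ)
    cases l with
    | nil => exact hψ
    | cons _ _ => exact ⟨hψ, ih⟩

theorem truth_imp_of_not_truth (M : FSModel) {ψ : IMF} (h : ∀ w x, ¬ M.truth ψ w x) (χ : IMF)
    (w : M.W) (x : M.D) : M.truth (imp ψ χ) w x :=
  fun v _ hv => absurd hv (h v x)

theorem truth_FormF (M : FSModel) {f : ℕ} (hf_false : ∀ w x, ¬ M.truth (var f) w x) (φ : IMF)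
    (w : M.W) (x : M.D) : M.truth (FormF φ f) w x := by
  have hf_imp : ∀ χ w x, M.truth (imp (var f) χ) w x := M.truth_imp_of_not_truth hf_false
  refine ⟨M.truth_imp_of_not_truth (M.not_truth_diaLe hf_false φ.md) _ w x, hf_imp _ w x, ?_⟩
  refine M.truth_listAnd (hf_imp _) (fun ψ hψ => ?_) w x
  obtain ⟨p, -, rfl⟩ := List.mem_map.mp hψ
  exact M.truth_boxLe (hf_imp _) φ.md

theorem trueIn_of_trueIn_clearVar_eMap (M : FSModel) {φ : IMF} {f : ℕ} (hf : f ∉ φ.vars)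
    (h : (M.clearVar f).trueIn (eMap φ f)) : M.trueIn φ := by
  intro w x hx
  have hf_false := M.not_truth_clearVar_var f
  have hφf := h w x hx w (M.refl w) ((M.clearVar f).truth_FormF hf_false φ w x)
  have hφ := (truth_botTo_iff (M.clearVar f) hf_false φ w x).mp hφf
  exact (M.truth_clearVar_iff hf w x).mp hφ

end FSModel

/-- Right-to-left direction of Lemma 1: for `L ∈ {FS, MIPC}`, if `F → φ^f ∈ L`
(with `f` a variable not occurring in `φ`), then `φ ∈ L`. -/
theorem stmt9 (L : Set IMF) (hL : L = FSLogic ∨ L = MIPCLogic)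
    (φ : IMF) (f : ℕ) (hf : f ∉ φ.vars) (h : IMF.eMap φ f ∈ L) :
    φ ∈ L := by
  rcases hL with rfl | rfl
  · exact fun M => M.trueIn_of_trueIn_clearVar_eMap hf (h (M.clearVar f))
  · exact fun M hM =>
      M.trueIn_of_trueIn_clearVar_eMap hf (h (M.clearVar f) (M.isMIPC_clearVar hM f))
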